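/- arXiv:2304.10077 — 2 statements merged into one kernel-verified Lean document; each statement's English description precedes it below -/
import Mathlib

section
/- Let T, A, B : ℕ → ℝ with T(n) = A(n) + B(n), A(n) ≥ B(n) ≥ 0, and A(n) > 0 for all n ≥ 1. Suppose T(ℓ+m) ≥ A(ℓ)*A(m) + 2*B(ℓ)*B(m) for all ℓ, m ≥ 1. Then T(ℓ+m) ≥ (1/3)*T(ℓ)*T(m) for all ℓ, m ≥ 1. -/
theorem stmt_11 (T A B : ℕ → ℝ)
    (hT : ∀ n, T n = A n + B n)
    (hAB : ∀ n, A n ≥ B n) (hB : ∀ n, B n ≥ 0)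
    (hA : ∀ n, 1 ≤ n → 0 < A n)
    (hconcat : ∀ ℓ m, 1 ≤ ℓ → 1 ≤ m → T (ℓ + m) ≥ A ℓ * A m + 2 * B ℓ * B m) :
    ∀ ℓ m, 1 ≤ ℓ → 1 ≤ m → T (ℓ + m) ≥ (1 / 3) * T ℓ * T m := by
  intro ℓ m hℓ hm
  have h := hconcat ℓ m hℓ hm
  have h1 := hAB ℓ; have h2 := hAB m; have h3 := hB ℓ; have h4 := hB m
  rw [hT ℓ, hT m]
  nlinarith [mul_nonneg h3 h4, mul_le_mul_of_nonneg_left h2 (le_trans h3 h1),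
    mul_le_mul_of_nonneg_right h1 (le_trans h4 h2)]
end

section
/- The real number (15936363137225733301433441827683823)^(1/75) is strictly greater than 2.8578. -/
theorem stmt_13 :
    (15936363137225733301433441827683823 : ℝ) ^ ((1 : ℝ) / 75) > 2.8578 := by
  have h : ((2.8578 : ℝ) ^ (75 : ℕ)) < 15936363137225733301433441827683823 := by
    norm_num
  have h2 : ((2.8578 : ℝ) ^ (75 : ℕ)) ^ ((1 : ℝ) / 75) <
      (15936363137225733301433441827683823 : ℝ) ^ ((1 : ℝ) / 75) :=
    Real.rpow_lt_rpow (by positivity) h (by norm_num)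
  calc (2.8578 : ℝ) = ((2.8578 : ℝ) ^ (75 : ℕ)) ^ ((1 : ℝ) / 75) := by
        rw [← Real.rpow_natCast (2.8578 : ℝ) 75, ← Real.rpow_mul (by norm_num)]
        norm_num
    _ < _ := h2
end
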